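/- Let n, t, m ∈ ℕ with m ≤ n + t, identify length-(n+t) bitstrings with pairs (first m bits, last n+t−m bits), and for j : Fin m → Fin 2 let Π_j be the orthogonal projection on EuclideanSpace ℂ (Fin (n+t) → Fin 2) onto bitstrings whose first m bits equal j. Let ε ∈ [0,1], let f : (Fin n → Fin 2) → (Fin m → Fin 2), and let V be a unitary on EuclideanSpace ℂ (Fin (n+t) → Fin 2) with ‖Π_{f(x)}(V e_{pad(x)})‖² ≥ 1 − ε for every x. Let COPY be the unitary of EuclideanSpace ℂ ((Fin (n+t) → Fin 2) × (Fin m → Fin 2)) permuting standard basis vectors by e_s ⊗ e_z ↦ e_s ⊗ e_{z ⊕ s|_m}, where s|_m is the first m bits of s, and set W = (V⁻¹ ⊗ I) ∘ COPY ∘ (V ⊗ I). Then for every x : Fin n → Fin 2, |⟨e_{pad(x)} ⊗ e_{f(x)}, W(e_{pad(x)} ⊗ e_{0})⟩|² ≥ (1 − ε)², where 0 is the all-zeros string of length m. (The approximate uncomputation bound in the proof of the paper's Lemma 5.14: a circuit computing f with per-input success probability 1 − ε, conjugated around a transversal copy, implements the map x ↦ (x, f(x)) with success probability at least (1 − ε)²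 ≥ 1 − 2ε on every basis input.) -/

import Mathlib

/-- `pad n t x` is the length-`(n+t)` bitstring equal to `x` on the first `n`
coordinates and `0` on the remaining `t`. -/
def pad (n t : ℕ) (x : Fin n → Fin 2) : Fin (n + t) → Fin 2 :=
  fun j => if h : (j : ℕ) < n then x ⟨j, h⟩ else 0

/-- The first `m` bits of a length-`k` bitstring. -/
def takeBits {k : ℕ} (m : ℕ) (hm : m ≤ k) (s : Fin k → Fin 2) : Fin m → Fin 2 :=
  fun j => s (Fin.castLE hm j)

/-- Orthogonal projection onto bitstrings whose first `m` bits equal `j`. -/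
def projBits {k m : ℕ} (hm : m ≤ k) (j : Fin m → Fin 2)
    (v : EuclideanSpace ℂ (Fin k → Fin 2)) : EuclideanSpace ℂ (Fin k → Fin 2) :=
  WithLp.toLp 2 (fun s => if takeBits m hm s = j then v s else 0)

/-- Pure tensor: `(u ⊗ w)(p, q) = u p * w q`. -/
def tens {P Q : Type*} (u : EuclideanSpace ℂ P) (w : EuclideanSpace ℂ Q) :
    EuclideanSpace ℂ (P × Q) :=
  WithLp.toLp 2 (fun p => u p.1 * w p.2)

/-- The transversal-copy unitary: on basis vectors,
`e_s ⊗ e_z ↦ e_s ⊗ e_{z ⊕ s|_m}` where `s|_m` is the first `m` bits of `s`. -/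
def copyOp {k m : ℕ} (hm : m ≤ k)
    (v : EuclideanSpace ℂ ((Fin k → Fin 2) × (Fin m → Fin 2))) :
    EuclideanSpace ℂ ((Fin k → Fin 2) × (Fin m → Fin 2)) :=
  WithLp.toLp 2 (fun p => v (p.1, fun j => p.2 j + takeBits m hm p.1 j))

/-- An operator acting on the first factor of a product register
(`V ⊗ I`). -/
def opTensId {P Q : Type*}
    (V : EuclideanSpace ℂ P → EuclideanSpace ℂ P)
    (v : EuclideanSpace ℂ (P × Q)) : EuclideanSpace ℂ (P × Q) :=
  WithLp.toLp 2 (fun p => V (WithLp.toLp 2 (fun p' => v (p', p.2))) p.1)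


/-!
Write `ψ = V e_{pad x}` and `Π = Π_{f x}`. Since `V ⊗ I` acts on a product state factorwise, the
copy leaves in the slice `f x` of the ancilla exactly the components of `ψ` whose first `m` bits
are `f x`, i.e. `Π ψ`. Undoing `V` and reading off the coefficient of `e_{pad x}` therefore gives
`⟪ψ, Π ψ⟫ = ‖Π ψ‖²`, whose square is at least `(1 - ε)²`.
-/

open EuclideanSpace

section Tensor

variable {P Q : Type*}

def sliceSnd (v : EuclideanSpace ℂ (P × Q)) (q : Q) : EuclideanSpace ℂ P :=
  WithLp.toLp 2 (fun p => v (p, q))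

lemma opTensId_apply (V : EuclideanSpace ℂ P → EuclideanSpace ℂ P)
    (v : EuclideanSpace ℂ (P × Q)) (r : P × Q) :
    opTensId V v r = V (sliceSnd v r.2) r.1 :=
  rfl

lemma sliceSnd_tens (u : EuclideanSpace ℂ P) (w : EuclideanSpace ℂ Q) (q : Q) :
    sliceSnd (tens u w) q = w q • u := by
  ext p
  simp [sliceSnd, tens, mul_comm]

lemma opTensId_tens {F : Type*} [FunLike F (EuclideanSpace ℂ P) (EuclideanSpace ℂ P)]
    [LinearMapClass F ℂ (EuclideanSpace ℂ P) (EuclideanSpace ℂ P)] (V : F)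
    (u : EuclideanSpace ℂ P) (w : EuclideanSpace ℂ Q) :
    opTensId V (tens u w) = tens (V u) w := by
  ext r
  rw [opTensId_apply, sliceSnd_tens, map_smul]
  simp [tens, mul_comm]

lemma tens_single [DecidableEq P] [DecidableEq Q] (p : P) (q : Q) :
    tens (single p (1 : ℂ)) (single q (1 : ℂ)) = single (p, q) (1 : ℂ) := by
  ext r
  simp only [tens, PiLp.single_apply, Prod.ext_iff]
  split_ifs <;> simp_all

lemma inner_tens_single_single [Fintype P] [Fintype Q] [DecidableEq P] [DecidableEq Q]
    (p : P) (q : Q) (v : EuclideanSpace ℂ (P × Q)) :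
    inner ℂ (tens (single p (1 : ℂ)) (single q (1 : ℂ))) v = v (p, q) := by
  simp [tens_single, inner_single_left]

end Tensor

lemma LinearIsometryEquiv.symm_apply_eq_inner {P : Type*} [Fintype P] [DecidableEq P]
    (V : EuclideanSpace ℂ P ≃ₗᵢ[ℂ] EuclideanSpace ℂ P) (w : EuclideanSpace ℂ P) (p : P) :
    V.symm w p = inner ℂ (V (single p 1)) w := by
  calc V.symm w p = inner ℂ (single p 1) (V.symm w) := by simp [inner_single_left]
    _ = inner ℂ (V (single p 1)) w := by rw [← V.inner_map_map, V.apply_symm_apply]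

section Bits

variable {k m : ℕ} (hm : m ≤ k)

lemma add_takeBits_eq_zero_iff (s : Fin k → Fin 2) (j : Fin m → Fin 2) :
    (fun i => j i + takeBits m hm s i) = 0 ↔ takeBits m hm s = j := by
  have h2 : ∀ a b : Fin 2, a + b = 0 ↔ b = a := by decide
  simp only [funext_iff, Pi.zero_apply, h2]

lemma sliceSnd_copyOp_tens_single_zero (ψ : EuclideanSpace ℂ (Fin k → Fin 2))
    (j : Fin m → Fin 2) :
    sliceSnd (copyOp hm (tens ψ (single 0 1))) j = projBits hm j ψ := by
  ext s
  simp only [sliceSnd, copyOp, tens, projBits, PiLp.single_apply, add_takeBits_eq_zero_iff]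
  split_ifs <;> simp

lemma inner_projBits_self (j : Fin m → Fin 2) (ψ : EuclideanSpace ℂ (Fin k → Fin 2)) :
    inner ℂ ψ (projBits hm j ψ) = ((‖projBits hm j ψ‖ ^ 2 : ℝ) : ℂ) := by
  have hψ : inner ℂ ψ (projBits hm j ψ) = inner ℂ (projBits hm j ψ) (projBits hm j ψ) := by
    simp only [PiLp.inner_apply, RCLike.inner_apply, projBits]
    refine Finset.sum_congr rfl fun s _ => ?_
    split_ifs <;> simp
  rw [hψ, inner_self_eq_norm_sq_to_K]
  norm_cast

end Bits

theorem approximate_uncomputation_general (n t m : ℕ) (hm : m ≤ n + t)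
    (ε : ℝ) (hε1 : ε ≤ 1)
    (f : (Fin n → Fin 2) → (Fin m → Fin 2))
    (V : EuclideanSpace ℂ (Fin (n + t) → Fin 2) ≃ₗᵢ[ℂ]
         EuclideanSpace ℂ (Fin (n + t) → Fin 2))
    (hV : ∀ x : Fin n → Fin 2,
      1 - ε ≤ ‖projBits hm (f x) (V (EuclideanSpace.single (pad n t x) 1))‖ ^ 2) :
    ∀ x : Fin n → Fin 2,
      (1 - ε) ^ 2 ≤ ‖(inner ℂ
          (tens (EuclideanSpace.single (pad n t x) 1)
            (EuclideanSpace.single (f x) 1))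
          (opTensId (⇑V.symm) (copyOp hm (opTensId (⇑V)
            (tens (EuclideanSpace.single (pad n t x) 1)
              (EuclideanSpace.single (0 : Fin m → Fin 2) 1))))) : ℂ)‖ ^ 2 := by
  intro x
  rw [inner_tens_single_single, opTensId_apply, opTensId_tens,
    sliceSnd_copyOp_tens_single_zero, V.symm_apply_eq_inner, inner_projBits_self,
    Complex.norm_real, Real.norm_of_nonneg (by positivity)]
  exact pow_le_pow_left₀ (by linarith) (hV x) 2

/-- Approximate uncomputation bound: a circuit computing `f` with per-input
success probability `1 − ε`, conjugated around a transversal copy, implements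
`x ↦ (x, f(x))` with success probability at least `(1 − ε)²` on every basis
input. -/
theorem approximate_uncomputation (n t m : ℕ) (hm : m ≤ n + t)
    (ε : ℝ) (hε0 : 0 ≤ ε) (hε1 : ε ≤ 1)
    (f : (Fin n → Fin 2) → (Fin m → Fin 2))
    (V : EuclideanSpace ℂ (Fin (n + t) → Fin 2) ≃ₗᵢ[ℂ]
         EuclideanSpace ℂ (Fin (n + t) → Fin 2))
    (hV : ∀ x : Fin n → Fin 2,
      1 - ε ≤ ‖projBits hm (f x) (V (EuclideanSpace.single (pad n t x) 1))‖ ^ 2) :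
    ∀ x : Fin n → Fin 2,
      (1 - ε) ^ 2 ≤ ‖(inner ℂ
          (tens (EuclideanSpace.single (pad n t x) 1)
            (EuclideanSpace.single (f x) 1))
          (opTensId (⇑V.symm) (copyOp hm (opTensId (⇑V)
            (tens (EuclideanSpace.single (pad n t x) 1)
              (EuclideanSpace.single (0 : Fin m → Fin 2) 1))))) : ℂ)‖ ^ 2 :=
  approximate_uncomputation_general n t m hm ε hε1 f V hV
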